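/- Let $(W_t)_{t\ge 0}$ be a standard Brownian motion and $a>0$. With $W^+, W^-$ the reflected processes $W^+_t = W_t - \inf_{s\le t}W_s$, $W^-_t = \sup_{s\le t}W_s - W_t$, and $\gamma^\pm_a$ their respective hitting times of level $a$, one has $\gamma^+_a \wedge \gamma^-_a = \inf\{r\ge 0 : W^+_r + W^-_r = a\}$; moreover, on the event $\{\gamma^+_a < \gamma^-_a\}$ one has $W^-_{\gamma^+_a}=0$, and on $\{\gamma^-_a < \gamma^+_a\}$ one has $W^+_{\gamma^-_a}=0$. -/

import Mathlib

/-! The range `R = W⁺ + W⁻ = sup W - inf W` is continuous, vanishes at `0` and dominates both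
`W⁺` and `W⁻`, so neither reflected process reaches `a` before `R` does. At the first time `τ`
with `R τ = a` the range is strictly smaller at all earlier times, so the running maximum or the
running minimum is attained only at `τ`: the path sits at one of them, hence one reflected process
equals `a` there and the other vanishes. Almost surely both `W⁺` and `W⁻` do reach `a`, since among
the i.i.d. `N(0,1)` increments `W (k+1) - W k` one exceeds `a` and one lies below `-a`; without
this, the junk value `sInf ∅ = 0` of a hitting time would break the identity. -/

open MeasureTheory ProbabilityTheory Filter Set

/-- A standard Brownian motion (indexed by `ℝ`, relevant for `t ≥ 0`), started at `0`. -/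
structure IsBrownianMotion {Ω : Type*} [MeasurableSpace Ω] (P : Measure Ω)
    (W : ℝ → Ω → ℝ) : Prop where
  isProb : IsProbabilityMeasure P
  meas : ∀ t, Measurable (W t)
  start : ∀ ω, W 0 ω = 0
  cont : ∀ ω, Continuous fun t => W t ω
  incr : ∀ s t : ℝ, 0 ≤ s → s ≤ t →
    P.map (fun ω => W t ω - W s ω) = gaussianReal 0 (Real.toNNReal (t - s))
  indep : ∀ (n : ℕ) (t : Fin (n + 1) → ℝ), (∀ i, 0 ≤ t i) → Monotone t →
    iIndepFun
      (fun i : Fin n => fun ω => W (t i.succ) ω - W (t i.castSucc) ω) P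

variable {Ω : Type*} [MeasurableSpace Ω]

/-- `W⁺_t = W_t - inf_{s ≤ t} W_s`, the Brownian motion reflected at its running infimum. -/
noncomputable def Wplus (W : ℝ → Ω → ℝ) (t : ℝ) (ω : Ω) : ℝ :=
  W t ω - sInf ((fun s => W s ω) '' Set.Icc 0 t)

/-- `W⁻_t = sup_{s ≤ t} W_s - W_t`, the Brownian motion reflected at its running supremum. -/
noncomputable def Wminus (W : ℝ → Ω → ℝ) (t : ℝ) (ω : Ω) : ℝ :=
  sSup ((fun s => W s ω) '' Set.Icc 0 t) - W t ω

/-- `γ⁺_a`: first hitting time of `a` by `W⁺`. -/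
noncomputable def gammaPlus (W : ℝ → Ω → ℝ) (a : ℝ) (ω : Ω) : ℝ :=
  sInf {r : ℝ | 0 ≤ r ∧ Wplus W r ω = a}

/-- `γ⁻_a`: first hitting time of `a` by `W⁻`. -/
noncomputable def gammaMinus (W : ℝ → Ω → ℝ) (a : ℝ) (ω : Ω) : ℝ :=
  sInf {r : ℝ | 0 ≤ r ∧ Wminus W r ω = a}

/-- The first time `t ≥ 0` at which `g t = a` (junk value `0` if there is none). -/
noncomputable def firstHit (g : ℝ → ℝ) (a : ℝ) : ℝ :=
  sInf {t : ℝ | 0 ≤ t ∧ g t = a}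

noncomputable def runningSup (f : ℝ → ℝ) (t : ℝ) : ℝ :=
  sSup (f '' Icc 0 t)

noncomputable def runningInf (f : ℝ → ℝ) (t : ℝ) : ℝ :=
  sInf (f '' Icc 0 t)

section FirstHit

variable {g : ℝ → ℝ} {a r : ℝ}

lemma firstHit_le_of_eq (hr : 0 ≤ r) (hra : g r = a) : firstHit g a ≤ r :=
  csInf_le ⟨0, fun _ ht => ht.1⟩ ⟨hr, hra⟩

lemma firstHit_le (hg : ContinuousOn g (Ici 0)) (h0 : g 0 ≤ a) (hr : 0 ≤ r) (hra : a ≤ g r) :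
    firstHit g a ≤ r := by
  obtain ⟨s, hs, hsa⟩ := intermediate_value_Icc hr (hg.mono Icc_subset_Ici_self) ⟨h0, hra⟩
  exact (firstHit_le_of_eq hs.1 hsa).trans hs.2

lemma firstHit_mem (hg : ContinuousOn g (Ici 0)) (h0 : g 0 ≤ a) (hr : 0 ≤ r) (hra : a ≤ g r) :
    0 ≤ firstHit g a ∧ g (firstHit g a) = a := by
  obtain ⟨s, hs, hsa⟩ := intermediate_value_Icc hr (hg.mono Icc_subset_Ici_self) ⟨h0, hra⟩
  have hclosed : IsClosed {t : ℝ | 0 ≤ t ∧ g t = a} :=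
    hg.preimage_isClosed_of_isClosed isClosed_Ici isClosed_singleton
  exact hclosed.csInf_mem ⟨s, hs.1, hsa⟩ ⟨0, fun _ ht => ht.1⟩

lemma firstHit_le_firstHit {h : ℝ → ℝ} (hg : ContinuousOn g (Ici 0)) (hh : ContinuousOn h (Ici 0))
    (hg0 : g 0 ≤ a) (hh0 : h 0 ≤ a) (hgh : ∀ t, 0 ≤ t → g t ≤ h t) (hr : 0 ≤ r) (hra : a ≤ g r) :
    firstHit h a ≤ firstHit g a :=
  have hmem := firstHit_mem hg hg0 hr hra
  firstHit_le hh hh0 hmem.1 (hmem.2.ge.trans (hgh _ hmem.1))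

end FirstHit

section Running

variable {f : ℝ → ℝ} {s t : ℝ}

lemma le_runningSup (hf : Continuous f) (hs : s ∈ Icc 0 t) : f s ≤ runningSup f t :=
  le_csSup (isCompact_Icc.image hf).bddAbove (mem_image_of_mem f hs)

lemma runningInf_le (hf : Continuous f) (hs : s ∈ Icc 0 t) : runningInf f t ≤ f s :=
  csInf_le (isCompact_Icc.image hf).bddBelow (mem_image_of_mem f hs)

lemma exists_eq_runningSup (hf : Continuous f) (ht : 0 ≤ t) :
    ∃ s ∈ Icc 0 t, runningSup f t = f s :=
  isCompact_Icc.exists_sSup_image_eq (nonempty_Icc.2 ht) hf.continuousOn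

lemma exists_eq_runningInf (hf : Continuous f) (ht : 0 ≤ t) :
    ∃ s ∈ Icc 0 t, runningInf f t = f s :=
  isCompact_Icc.exists_sInf_image_eq (nonempty_Icc.2 ht) hf.continuousOn

lemma runningSup_zero : runningSup f 0 = f 0 := by
  rw [runningSup, Icc_self, image_singleton, csSup_singleton]

lemma runningInf_zero : runningInf f 0 = f 0 := by
  rw [runningInf, Icc_self, image_singleton, csInf_singleton]

lemma image_Icc_zero_eq_image_rescaled (ht : 0 ≤ t) :
    f '' Icc 0 t = (fun u => f (t * u)) '' Icc 0 1 := by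
  rw [← image_image f (t * ·), image_mul_left_Icc ht zero_le_one, mul_zero, mul_one]

-- Writing `[0, t]` as `t • [0, 1]` puts the supremum over a fixed compact set.
lemma continuousOn_runningSup (hf : Continuous f) : ContinuousOn (runningSup f) (Ici 0) :=
  (isCompact_Icc.continuous_sSup (hf.comp (continuous_fst.mul continuous_snd))).continuousOn.congr
    fun _ ht => by rw [runningSup, image_Icc_zero_eq_image_rescaled ht]

lemma continuousOn_runningInf (hf : Continuous f) : ContinuousOn (runningInf f) (Ici 0) :=
  (isCompact_Icc.continuous_sInf (hf.comp (continuous_fst.mul continuous_snd))).continuousOn.congr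
    fun _ ht => by rw [runningInf, image_Icc_zero_eq_image_rescaled ht]

lemma eq_runningSup_or_eq_runningInf (hf : Continuous f) (ht : 0 ≤ t)
    (hlt : ∀ s ∈ Ico 0 t,
      runningSup f s - runningInf f s < runningSup f t - runningInf f t) :
    f t = runningSup f t ∨ f t = runningInf f t := by
  obtain ⟨t₁, ht₁, hmax⟩ := exists_eq_runningSup hf ht
  obtain ⟨t₂, ht₂, hmin⟩ := exists_eq_runningInf hf ht
  by_contra! hne
  have h₁ : t₁ < t := ht₁.2.lt_of_ne (by rintro rfl; exact hne.1 hmax.symm)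
  have h₂ : t₂ < t := ht₂.2.lt_of_ne (by rintro rfl; exact hne.2 hmin.symm)
  -- Otherwise both extrema over `[0, t]` are attained before `t`, and at the later of the two
  -- times the range already has its value at `t`.
  have hrange := hlt (max t₁ t₂) ⟨le_max_of_le_left ht₁.1, max_lt h₁ h₂⟩
  have hsup := le_runningSup hf ⟨ht₁.1, le_max_left t₁ t₂⟩
  have hinf := runningInf_le hf ⟨ht₂.1, le_max_right t₁ t₂⟩
  linarith

end Running

section ReflectedPaths

variable {α : Type*} {W : ℝ → α → ℝ} {ω : α} {s t : ℝ}

lemma Wplus_eq : Wplus W t ω = W t ω - runningInf (W · ω) t := rfl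

lemma Wminus_eq : Wminus W t ω = runningSup (W · ω) t - W t ω := rfl

lemma sub_le_Wplus (hf : Continuous (W · ω)) (hs : s ∈ Icc 0 t) :
    W t ω - W s ω ≤ Wplus W t ω :=
  sub_le_sub_left (runningInf_le hf hs) _

lemma sub_le_Wminus (hf : Continuous (W · ω)) (hs : s ∈ Icc 0 t) :
    W s ω - W t ω ≤ Wminus W t ω :=
  sub_le_sub_right (le_runningSup hf hs) _

lemma continuousOn_Wplus (hf : Continuous (W · ω)) : ContinuousOn (Wplus W · ω) (Ici 0) :=
  hf.continuousOn.sub (continuousOn_runningInf hf)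

lemma continuousOn_Wminus (hf : Continuous (W · ω)) : ContinuousOn (Wminus W · ω) (Ici 0) :=
  (continuousOn_runningSup hf).sub hf.continuousOn

lemma Wplus_zero : Wplus W 0 ω = 0 := by
  rw [Wplus_eq, runningInf_zero, sub_self]

lemma Wminus_zero : Wminus W 0 ω = 0 := by
  rw [Wminus_eq, runningSup_zero, sub_self]

lemma Wplus_nonneg (hf : Continuous (W · ω)) (ht : 0 ≤ t) : 0 ≤ Wplus W t ω := by
  simpa using sub_le_Wplus hf ⟨ht, le_rfl⟩

lemma Wminus_nonneg (hf : Continuous (W · ω)) (ht : 0 ≤ t) : 0 ≤ Wminus W t ω := by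
  simpa using sub_le_Wminus hf ⟨ht, le_rfl⟩

lemma Wplus_add_Wminus :
    Wplus W t ω + Wminus W t ω = runningSup (W · ω) t - runningInf (W · ω) t := by
  rw [Wplus_eq, Wminus_eq]; ring

theorem min_firstHit_Wplus_Wminus (hf : Continuous (W · ω)) {a : ℝ} (ha : 0 ≤ a)
    (hp : ∃ r, 0 ≤ r ∧ a ≤ Wplus W r ω) (hm : ∃ r, 0 ≤ r ∧ a ≤ Wminus W r ω) :
    min (firstHit (Wplus W · ω) a) (firstHit (Wminus W · ω) a)
        = firstHit (fun t => Wplus W t ω + Wminus W t ω) a ∧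
      (firstHit (Wplus W · ω) a < firstHit (Wminus W · ω) a →
        Wminus W (firstHit (Wplus W · ω) a) ω = 0) ∧
      (firstHit (Wminus W · ω) a < firstHit (Wplus W · ω) a →
        Wplus W (firstHit (Wminus W · ω) a) ω = 0) := by
  obtain ⟨rp, hrp, hrap⟩ := hp
  obtain ⟨rm, hrm, hram⟩ := hm
  have hplus := continuousOn_Wplus hf
  have hminus := continuousOn_Wminus hf
  have hplus0 : Wplus W 0 ω ≤ a := Wplus_zero.trans_le ha
  have hminus0 : Wminus W 0 ω ≤ a := Wminus_zero.trans_le ha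
  have hrange : ContinuousOn (fun t => Wplus W t ω + Wminus W t ω) (Ici 0) := hplus.add hminus
  have hrange0 : Wplus W 0 ω + Wminus W 0 ω ≤ a := by
    rw [Wplus_zero, Wminus_zero, add_zero]; exact ha
  have hτp := firstHit_le_firstHit hplus hrange hplus0 hrange0
    (fun t ht => le_add_of_nonneg_right (Wminus_nonneg hf ht)) hrp hrap
  have hτm := firstHit_le_firstHit hminus hrange hminus0 hrange0
    (fun t ht => le_add_of_nonneg_left (Wplus_nonneg hf ht)) hrm hram
  obtain ⟨hτ0, hτa⟩ := firstHit_mem hrange hrange0 hrp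
    (hrap.trans (le_add_of_nonneg_right (Wminus_nonneg hf hrp)))
  set τ := firstHit (fun t => Wplus W t ω + Wminus W t ω) a
  have hbefore : ∀ s ∈ Ico 0 τ, Wplus W s ω + Wminus W s ω < a := fun s hs =>
    lt_of_not_ge fun h => (firstHit_le hrange hrange0 hs.1 h).not_gt hs.2
  rcases eq_runningSup_or_eq_runningInf hf hτ0 (by simpa only [← Wplus_add_Wminus, hτa]
    using hbefore) with hsup | hinf
  · have hminusτ : Wminus W τ ω = 0 := by rw [Wminus_eq, ← hsup, sub_self]
    have hγp : firstHit (Wplus W · ω) a = τ :=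
      (firstHit_le_of_eq hτ0 (by simpa [hminusτ] using hτa)).antisymm hτp
    rw [hγp]
    exact ⟨min_eq_left hτm, fun _ => hminusτ, fun h => absurd h hτm.not_gt⟩
  · have hplusτ : Wplus W τ ω = 0 := by rw [Wplus_eq, ← hinf, sub_self]
    have hγm : firstHit (Wminus W · ω) a = τ :=
      (firstHit_le_of_eq hτ0 (by simpa [hplusτ] using hτa)).antisymm hτm
    rw [hγm]
    exact ⟨min_eq_right hτp, fun h => absurd h hτp.not_gt, fun _ => hplusτ⟩
end ReflectedPaths

lemma gaussianReal_compl_lt_one {s : Set ℝ} (hs : MeasurableSet s) (hvol : volume s ≠ 0) :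
    gaussianReal 0 1 sᶜ < 1 := by
  rw [prob_compl_eq_one_sub hs]
  exact ENNReal.sub_lt_self ENNReal.one_ne_top one_ne_zero
    fun h => hvol (gaussianReal_absolutelyContinuous' 0 one_ne_zero h)

namespace IsBrownianMotion

variable {P : Measure Ω} {W : ℝ → Ω → ℝ} {s : Set ℝ}

lemma measure_forall_increment_mem_le (hW : IsBrownianMotion P W) (hs : MeasurableSet s)
    (n : ℕ) : P {ω | ∀ k : ℕ, W (k + 1) ω - W k ω ∈ s} ≤ gaussianReal 0 1 s ^ n := by
  have hmono : Monotone fun j : Fin (n + 1) => (j : ℝ) := fun _ _ h => Nat.cast_le.2 h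
  have hincrement (i : Fin n) :
      P ((fun ω => W (i.succ : ℕ) ω - W (i.castSucc : ℕ) ω) ⁻¹' s) = gaussianReal 0 1 s := by
    have hmeas : Measurable fun ω => W (i.succ : ℕ) ω - W (i.castSucc : ℕ) ω :=
      (hW.meas _).sub (hW.meas _)
    rw [← Measure.map_apply hmeas hs,
      hW.incr _ _ (Nat.cast_nonneg _) (hmono (Fin.castSucc_le_succ i))]
    simp
  calc P {ω | ∀ k : ℕ, W (k + 1) ω - W k ω ∈ s}
      ≤ P (⋂ i ∈ (Finset.univ : Finset (Fin n)),
          (fun ω => W (i.succ : ℕ) ω - W (i.castSucc : ℕ) ω) ⁻¹' s) :=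
        measure_mono fun ω hω => by simpa using fun i : Fin n => hω i
    _ = gaussianReal 0 1 s ^ n := by
        rw [(hW.indep n _ (fun _ => Nat.cast_nonneg _) hmono).measure_inter_preimage_eq_mul _
          fun _ _ => hs, Finset.prod_congr rfl fun i _ => hincrement i]
        simp

lemma ae_exists_increment_mem (hW : IsBrownianMotion P W) (hs : MeasurableSet s)
    (hvol : volume s ≠ 0) : ∀ᵐ ω ∂P, ∃ k : ℕ, W (k + 1) ω - W k ω ∈ s := by
  rw [ae_iff]
  simp only [not_exists]
  exact le_antisymm (ge_of_tendsto' (ENNReal.tendsto_pow_atTop_nhds_zero_of_lt_one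
    (gaussianReal_compl_lt_one hs hvol)) (hW.measure_forall_increment_mem_le hs.compl)) zero_le

end IsBrownianMotion

/-- `γ⁺_a ∧ γ⁻_a` is the first time the range `W⁺ + W⁻` of the path equals `a`; on
`{γ⁺_a < γ⁻_a}` one has `W⁻_{γ⁺_a} = 0`, and on `{γ⁻_a < γ⁺_a}` one has `W⁺_{γ⁻_a} = 0`. -/
theorem range_hitting_time_and_boundary
    (P : Measure Ω) (W : ℝ → Ω → ℝ) (hW : IsBrownianMotion P W)
    (a : ℝ) (ha : 0 < a) :
    ∀ᵐ ω ∂P,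
      min (gammaPlus W a ω) (gammaMinus W a ω)
          = sInf {r : ℝ | 0 ≤ r ∧ Wplus W r ω + Wminus W r ω = a} ∧
      (gammaPlus W a ω < gammaMinus W a ω → Wminus W (gammaPlus W a ω) ω = 0) ∧
      (gammaMinus W a ω < gammaPlus W a ω → Wplus W (gammaMinus W a ω) ω = 0) := by
  filter_upwards [hW.ae_exists_increment_mem (measurableSet_Ioi (a := a)) (by simp),
    hW.ae_exists_increment_mem (measurableSet_Iio (a := -a)) (by simp)] with ω ⟨k, hk⟩ ⟨l, hl⟩
  have hf := hW.cont ω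
  have hk' := sub_le_Wplus hf (s := k) ⟨k.cast_nonneg, le_add_of_nonneg_right zero_le_one⟩
  have hl' := sub_le_Wminus hf (s := l) ⟨l.cast_nonneg, le_add_of_nonneg_right zero_le_one⟩
  exact min_firstHit_Wplus_Wminus hf ha.le
    ⟨k + 1, by positivity, by linarith [mem_Ioi.1 hk]⟩
    ⟨l + 1, by positivity, by linarith [mem_Iio.1 hl]⟩
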